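/- arXiv:1112.4601 — 4 statements merged into one kernel-verified Lean document; each statement's English description precedes it below -/
import Mathlib

section
/- Let $f(x) = 1 + \sum_{j\ge 2} a_j x^j$ be a formal power series over $\mathbb{C}$ with $f(0)=1$ and $f'(0)=0$. Then for any $n \ge 1$, $\frac{[x^{n+2}]f^{n+1}}{n+1} = \frac{1}{2}\sum_{j=1}^{n-1} \frac{[x^{j+1}]f^j}{j}\cdot\frac{[x^{n-j+1}]f^{n-j}}{n-j} + \frac{[x^{n+2}]f^n}{n}$, where $[x^m]g$ denotes the coefficient of $x^m$ in the power series $g$. -/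
/-!
Let `φ = X / f` and let `u` be the series with `u(φ) = 1 / f`, i.e. `u = 1 / f(w)` for the
compositional inverse `w` of `φ`. Lagrange inversion in residue form,
`[x^m] H = [x^m] H(φ) φ' f^(m+1)`, together with `φ' = f⁻² (f - X f')` and
`(b + 1) [x^c] f' f^b = (c + 1) [x^(c+1)] f^(b+1)`, gives `[x^(k+p)] u^p = -(p / k) [x^(k+p)] f^k`.
For `p = 1` this expresses the left side and every factor of the sum through coefficients of `u`,
for `p = 2` it expresses the last term through `[x^(n+2)] u²`. As `f'(0) = 0` makes
`u = 1 + O(x²)`, the identity is then the coefficient of `x^(n+2)` in `u · u`.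
-/

open PowerSeries Finset

namespace PowerSeries

section CommRing

variable {R : Type*} [CommRing R]

theorem coeff_subst_mul_eq_sum {φ : R⟦X⟧} (hφ : constantCoeff φ = 0) (H S : R⟦X⟧) (m : ℕ) :
    coeff m (H.subst φ * S) = ∑ k ∈ range (m + 1), coeff k H * coeff m (φ ^ k * S) := by
  have hsubst : HasSubst φ := HasSubst.of_constantCoeff_zero' hφ
  have htail : coeff m (φ ^ (m + 1) * (mk fun i ↦ coeff (i + (m + 1)) H).subst φ * S) = 0 := by
    have hdvd : X ^ (m + 1) ∣ φ ^ (m + 1) := pow_dvd_pow_of_dvd (X_dvd_iff.mpr hφ) _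
    rw [mul_assoc]
    exact X_pow_dvd_iff.mp (hdvd.mul_right _) m (Nat.lt_succ_self m)
  conv_lhs => rw [eq_X_pow_mul_shift_add_trunc (m + 1) H]
  rw [subst_add hsubst, subst_mul hsubst, subst_pow hsubst, subst_X hsubst, subst_coe hsubst,
    add_mul, map_add, htail, zero_add, Polynomial.aeval_def, eval₂_trunc_eq_sum_range, sum_mul,
    map_sum]
  refine sum_congr rfl fun k _ ↦ ?_
  rw [Algebra.algebraMap_eq_smul_one, smul_mul_assoc, one_mul, smul_mul_assoc, coeff_smul,
    smul_eq_mul]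

theorem coeff_zero_subst {φ : R⟦X⟧} (hφ : constantCoeff φ = 0) (H : R⟦X⟧) :
    coeff 0 (H.subst φ) = coeff 0 H := by
  simpa using coeff_subst_mul_eq_sum hφ H 1 0

theorem coeff_one_subst {φ : R⟦X⟧} (hφ : constantCoeff φ = 0) (H : R⟦X⟧) :
    coeff 1 (H.subst φ) = coeff 1 H * coeff 1 φ := by
  simpa [sum_range_succ] using coeff_subst_mul_eq_sum hφ H 1 1

theorem natCast_succ_mul_coeff_derivative_mul_pow (f : R⟦X⟧) (b c : ℕ) :
    ((b : R) + 1) * coeff c (d⁄dX R f * f ^ b) = ((c : R) + 1) * coeff (c + 1) (f ^ (b + 1)) := by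
  have h := Derivation.leibniz_pow (d⁄dX R) f (b + 1)
  rw [Nat.add_sub_cancel, smul_eq_mul, mul_comm (f ^ b)] at h
  rw [mul_comm _ (coeff (c + 1) _), ← coeff_derivative, h, map_nsmul, nsmul_eq_mul]
  push_cast
  ring

theorem natCast_succ_mul_coeff_pow_mul_sub_X_mul_derivative (f : R⟦X⟧) (b c : ℕ) :
    ((b : R) + 1) * coeff (c + 1) (f ^ b * (f - X * d⁄dX R f))
      = ((b : R) - c) * coeff (c + 1) (f ^ (b + 1)) := by
  have h := natCast_succ_mul_coeff_derivative_mul_pow f b c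
  rw [show f ^ b * (f - X * d⁄dX R f) = f ^ (b + 1) - X * (d⁄dX R f * f ^ b) by ring, map_sub,
    coeff_succ_X_mul]
  linear_combination -h

theorem coeff_sq_eq_two_mul_add_sum {u : R⟦X⟧} (hu0 : coeff 0 u = 1) (hu1 : coeff 1 u = 0)
    (n : ℕ) : coeff (n + 2) (u ^ 2) = 2 * coeff (n + 2) u
      + ∑ j ∈ Icc 1 (n - 1), coeff (j + 1) u * coeff (n - j + 1) u := by
  have hinner : ∑ j ∈ range (n + 1), coeff (j + 1) u * coeff (n - j + 1) u
      = ∑ j ∈ Icc 1 (n - 1), coeff (j + 1) u * coeff (n - j + 1) u := by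
    refine (sum_subset (fun j hj ↦ ?_) fun j hj hj' ↦ ?_).symm
    · simp only [mem_Icc, mem_range] at hj ⊢
      omega
    · simp only [mem_Icc, mem_range] at hj hj'
      obtain rfl | rfl : j = 0 ∨ j = n := by omega
      all_goals simp [hu1]
  have hshift : ∀ j ∈ range (n + 1), coeff (j + 1) u * coeff (n + 2 - (j + 1)) u
      = coeff (j + 1) u * coeff (n - j + 1) u := fun j hj ↦ by
    rw [show n + 2 - (j + 1) = n - j + 1 by have := mem_range.mp hj; omega]
  rw [sq, coeff_mul, Nat.sum_antidiagonal_eq_sum_range_succ_mk, sum_range_succ, sum_range_succ',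
    sum_congr rfl hshift, hinner, Nat.sub_zero, Nat.sub_self, hu0]
  ring

end CommRing

section Field

variable {K : Type*} [Field K] {f : K⟦X⟧}

theorem inv_pow_mul_pow_add (hf : constantCoeff f ≠ 0) (a b : ℕ) :
    f⁻¹ ^ a * f ^ (a + b) = f ^ b := by
  rw [pow_add, ← mul_assoc, ← mul_pow, PowerSeries.inv_mul_cancel f hf, one_pow, one_mul]

theorem constantCoeff_X_mul_inv (f : K⟦X⟧) : constantCoeff (X * f⁻¹) = 0 := by
  simp

theorem coeff_one_inv (f : K⟦X⟧) :
    coeff 1 f⁻¹ = -coeff 1 f * (constantCoeff f)⁻¹ ^ 2 := by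
  rw [coeff_inv]
  simp [Nat.sum_antidiagonal_succ]
  ring

theorem derivative_X_mul_inv (hf : constantCoeff f ≠ 0) :
    d⁄dX K (X * f⁻¹) = f⁻¹ ^ 2 * (f - X * d⁄dX K f) := by
  have h := PowerSeries.inv_mul_cancel f hf
  rw [Derivation.leibniz, derivative_inv', derivative_X, smul_eq_mul, smul_eq_mul]
  linear_combination (-f⁻¹) * h

theorem exists_subst_X_mul_inv_eq (hf : constantCoeff f ≠ 0) (G : K⟦X⟧) :
    ∃ H : K⟦X⟧, H.subst (X * f⁻¹) = G := by
  have hunit : IsUnit (coeff 1 (X * f⁻¹)) := by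
    simpa [coeff_succ_X_mul] using hf
  refine ⟨G.subst ((X * f⁻¹).substInvOfIsUnit hunit), ?_⟩
  rw [subst_comp_subst_apply (HasSubst.substInvOfIsUnit _ hunit)
    (HasSubst.of_constantCoeff_zero' (constantCoeff_X_mul_inv f)),
    subst_substInvOfIsUnit_left _ (constantCoeff_X_mul_inv f), X_subst]

variable [CharZero K]

theorem coeff_X_mul_inv_pow_mul_derivative_mul_pow (hf : constantCoeff f ≠ 0) {k m : ℕ}
    (hkm : k ≤ m) :
    coeff m ((X * f⁻¹) ^ k * (d⁄dX K (X * f⁻¹) * f ^ (m + 1))) = if k = m then 1 else 0 := by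
  obtain ⟨j, rfl⟩ := Nat.exists_eq_add_of_le hkm
  rw [derivative_X_mul_inv hf, show (X * f⁻¹) ^ k * (f⁻¹ ^ 2 * (f - X * d⁄dX K f) * f ^ (k + j + 1))
    = X ^ k * (f⁻¹ ^ (k + 2) * f ^ (k + j + 1) * (f - X * d⁄dX K f)) by ring, add_comm k j,
    coeff_X_pow_mul]
  rcases j with _ | b
  · have h := inv_pow_mul_pow_add hf (k + 1) 0
    rw [show f⁻¹ ^ (k + 2) * f ^ (0 + k + 1) = f⁻¹ * (f⁻¹ ^ (k + 1) * f ^ (k + 1 + 0)) by ring, h]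
    simp [hf]
  · have h := natCast_succ_mul_coeff_pow_mul_sub_X_mul_derivative f b b
    rw [show b + 1 + k + 1 = k + 2 + b by ring, inv_pow_mul_pow_add hf, if_neg (by omega)]
    rw [sub_self, zero_mul] at h
    exact (mul_eq_zero.mp h).resolve_left (Nat.cast_add_one_ne_zero b)

/-- Lagrange inversion, in residue form, for the substitution of `X / f`. -/
theorem coeff_eq_coeff_subst_X_mul_inv_mul (hf : constantCoeff f ≠ 0) (H : K⟦X⟧) (m : ℕ) :
    coeff m H = coeff m (H.subst (X * f⁻¹) * (d⁄dX K (X * f⁻¹) * f ^ (m + 1))) := by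
  rw [coeff_subst_mul_eq_sum (constantCoeff_X_mul_inv f),
    sum_congr rfl fun k hk ↦ by
      rw [coeff_X_mul_inv_pow_mul_derivative_mul_pow hf (Nat.lt_succ_iff.mp (mem_range.mp hk))]]
  simp

theorem coeff_add_of_subst_X_mul_inv_eq_inv_pow (hf : constantCoeff f ≠ 0) {H : K⟦X⟧} {p : ℕ}
    (hH : H.subst (X * f⁻¹) = f⁻¹ ^ p) {k : ℕ} (hk : k ≠ 0) :
    coeff (k + p) H = -(p * coeff (k + p) (f ^ k) / k) := by
  obtain ⟨j, rfl⟩ := Nat.exists_eq_succ_of_ne_zero hk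
  have hsimp : f⁻¹ ^ p * (f⁻¹ ^ 2 * (f - X * d⁄dX K f) * f ^ (j + 1 + p + 1))
      = f ^ j * (f - X * d⁄dX K f) := by
    rw [← inv_pow_mul_pow_add hf (p + 2) j, show j + 1 + p + 1 = p + 2 + j by ring]
    ring
  have h := natCast_succ_mul_coeff_pow_mul_sub_X_mul_derivative f j (j + p)
  rw [coeff_eq_coeff_subst_X_mul_inv_mul hf, hH, derivative_X_mul_inv hf, hsimp,
    show j + 1 + p = j + p + 1 by ring]
  push_cast at h ⊢
  field_simp
  linear_combination h

end Field

end PowerSeries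

/-- Proposition A.2 (comb): for a formal power series `f` over `ℂ` with
`f(0) = 1` and `f'(0) = 0`, and any `n ≥ 1`,
`[x^{n+2}] f^{n+1} / (n+1)
  = (1/2) ∑_{j=1}^{n-1} ([x^{j+1}] f^j / j) ([x^{n-j+1}] f^{n-j} / (n-j))
    + [x^{n+2}] f^n / n`. -/
theorem stmt0 (f : PowerSeries ℂ)
    (h0 : PowerSeries.constantCoeff f = 1)
    (h1 : PowerSeries.coeff 1 f = 0)
    (n : ℕ) (hn : 1 ≤ n) :
    PowerSeries.coeff (n + 2) (f ^ (n + 1)) / (n + 1 : ℂ)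
      = (1 / 2) * ∑ j ∈ Finset.Icc 1 (n - 1),
          (PowerSeries.coeff (j + 1) (f ^ j) / (j : ℂ)) *
            (PowerSeries.coeff (n - j + 1) (f ^ (n - j)) / ((n : ℂ) - (j : ℂ)))
        + PowerSeries.coeff (n + 2) (f ^ n) / (n : ℂ) := by
  have hf : constantCoeff f ≠ 0 := by simp [h0]
  have hφ := constantCoeff_X_mul_inv f
  obtain ⟨u, hu⟩ := exists_subst_X_mul_inv_eq hf f⁻¹
  have hu0 : coeff 0 u = 1 := by simpa [hu, h0] using (coeff_zero_subst hφ u).symm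
  have hu1 : coeff 1 u = 0 := by
    simpa [hu, h0, h1, coeff_one_inv, coeff_succ_X_mul] using (coeff_one_subst hφ u).symm
  have hcoeff (k : ℕ) (hk : k ≠ 0) : coeff (k + 1) u = -(coeff (k + 1) (f ^ k) / k) := by
    simpa using coeff_add_of_subst_X_mul_inv_eq_inv_pow hf (p := 1) (by rw [hu, pow_one]) hk
  have hsq := coeff_add_of_subst_X_mul_inv_eq_inv_pow hf (p := 2)
    (by rw [subst_pow (HasSubst.of_constantCoeff_zero' hφ) u 2, hu]) (by omega : n ≠ 0)
  rw [coeff_sq_eq_two_mul_add_sum hu0 hu1] at hsq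
  have hsum : ∑ j ∈ Icc 1 (n - 1), coeff (j + 1) (f ^ j) / (j : ℂ) *
        (coeff (n - j + 1) (f ^ (n - j)) / ((n : ℂ) - j))
      = ∑ j ∈ Icc 1 (n - 1), coeff (j + 1) u * coeff (n - j + 1) u := by
    refine sum_congr rfl fun j hj ↦ ?_
    have hj := mem_Icc.mp hj
    rw [hcoeff j (by omega), hcoeff (n - j) (by omega), Nat.cast_sub (by omega)]
    ring
  rw [hsum, ← neg_neg (coeff (n + 2) (f ^ (n + 1)) / _), ← Nat.cast_add_one,
    ← hcoeff (n + 1) (by omega)]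
  push_cast at hsq
  linear_combination (-1 / 2 : ℂ) * hsq
end

section
/- For sequences $\mathbf{a}, \mathbf{b}, \mathbf{c} \in \mathbb{N}^{\infty}$ (eventually zero sequences of nonnegative integers) with $\|\mathbf{c}\| \ge 2$, the following identity holds: $\frac{(|\mathbf{c}| + \|\mathbf{c}\| - 3)!}{(|\mathbf{c}| - 1)!} \cdot (\|\mathbf{c}\| - 1) = \frac{1}{2} \sum_{\substack{\mathbf{c} = \mathbf{a} + \mathbf{b} \\ \mathbf{a}, \mathbf{b} \ne 0}} \binom{\mathbf{c}}{\mathbf{a}, \mathbf{b}} \frac{(|\mathbf{a}| + \|\mathbf{a}\| - 2)! \,(|\mathbf{b}| + \|\mathbf{b}\| - 2)!}{(|\mathbf{a}| - 1)! \,(|\mathbf{b}| - 1)!}$. -/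
/-- A sequence `d ∈ ℕ^∞` (eventually zero) is modelled by `d : ℕ →₀ ℕ`, where
`d i` is the entry `d_{i+1}`.  `wt d = |d| = ∑ i d_i` and `sz d = ‖d‖ = ∑ d_i`. -/
def stmt9wt (d : ℕ →₀ ℕ) : ℕ := d.sum fun i m => (i + 1) * m

def stmt9sz (d : ℕ →₀ ℕ) : ℕ := d.sum fun _ m => m

/-!
Write `f ⋆ g` for the binomial convolution `c ↦ ∑_{a + b = c} binom(c; a, b) f(a) g(b)`, and for
a weight `ω` put `R_u(a) = (u + |a|)^(‖a‖)` (rising factorial) and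
`Q_x(a) = x (x + |a| + 1)^(‖a‖ - 1)`, `Q_x(0) = 1`. For `a ≠ 0` one has
`Q_{-1}(a) = -(|a| + ‖a‖ - 2)! / (|a| - 1)!`, so the theorem is the case `x = y = -1` of the
multi-index Rothe–Hagen identity `Q_x ⋆ Q_y = Q_{x+y}`, after removing the terms with `a = 0` or
`b = 0` and using `|c|^(n) - (|c| - 1)^(n) = n |c|^(n-1)`.

Since `f ↦ f(· + eᵢ)` is a derivation for `⋆`, the identity at `c + eᵢ` reduces to
`R_u ⋆ Q_y = R_{u+y}` at `c`. That identity is proved the same way, by induction on `c`; its step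
needs `R_{X+m} ⋆ R_Y = R_X ⋆ R_{Y+m}` for natural `m`, which in turn follows by induction from the
difference formula `R_{u+1}(a) - R_u(a) = ∑ᵢ aᵢ R_{u+1+ωᵢ}(a - eᵢ)`.
-/

open Finset hiding antidiagonal mem_antidiagonal
open Finset.HasAntidiagonal Finsupp

theorem ascPochhammer_succ_eval_add_one {R : Type*} [CommSemiring R] (n : ℕ) (z : R) :
    (ascPochhammer R (n + 1)).eval (z + 1) =
      (ascPochhammer R (n + 1)).eval z + (n + 1) * (ascPochhammer R n).eval (z + 1) := by
  simpa [Polynomial.eval_comp] using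
    congrArg (Polynomial.eval z) (ascPochhammer_succ_comp_X_add_one (S := R) n)

theorem factorial_add_div_factorial {K : Type*} [Field K] [CharZero K] (r k : ℕ) :
    ((r + k).factorial : K) / r.factorial = (ascPochhammer K k).eval ((r : K) + 1) := by
  rw [div_eq_iff (Nat.cast_ne_zero.2 r.factorial_ne_zero), ← factorial_mul_ascPochhammer, mul_comm]

namespace Finsupp

variable {ι : Type*}

theorem induction_sub_single_one {motive : (ι →₀ ℕ) → Prop} (c : ι →₀ ℕ)
    (ind : ∀ c, (∀ i, c i ≠ 0 → motive (c - single i 1)) → motive c) : motive c := by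
  induction c using WellFoundedLT.induction with
  | _ c ih =>
    refine ind c fun i hi => ih _ ?_
    calc c - single i 1 < c - single i 1 + single i 1 :=
          lt_add_of_pos_right _ (pos_iff_ne_zero.2 (by simp))
      _ = c := sub_add_single_one_cancel hi

variable [DecidableEq ι]

theorem sum_antidiagonal_add_single {M : Type*} [AddCommMonoid M] (c : ι →₀ ℕ) (i : ι)
    {f : (ι →₀ ℕ) → (ι →₀ ℕ) → M} (hf : ∀ a b, a i = 0 → f a b = 0) :
    ∑ p ∈ antidiagonal (c + single i 1), f p.1 p.2 =
      ∑ p ∈ antidiagonal c, f (p.1 + single i 1) p.2 := by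
  rw [← sum_image (s := antidiagonal c) (g := fun p => (p.1 + single i 1, p.2))
    (f := fun p => f p.1 p.2) (by simp +contextual [Set.InjOn, Prod.ext_iff])]
  symm
  refine sum_subset ?_ fun p hp hnot => hf _ _ ?_
  · simp only [subset_iff, mem_image, mem_antidiagonal]
    rintro _ ⟨p, hp, rfl⟩
    rw [add_right_comm, hp]
  · by_contra hi
    refine hnot (mem_image.2 ⟨(p.1 - single i 1, p.2), ?_, ?_⟩)
    · rw [mem_antidiagonal] at hp ⊢
      rw [sub_single_one_add hi, hp, add_tsub_cancel_right]
    · simp [sub_add_single_one_cancel hi]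

theorem sum_antidiagonal_eq_add_add_sum_filter {M : Type*} [AddCommMonoid M] {c : ι →₀ ℕ}
    (hc : c ≠ 0) (f : (ι →₀ ℕ) × (ι →₀ ℕ) → M) :
    ∑ p ∈ antidiagonal c, f p =
      f (0, c) + f (c, 0) + ∑ p ∈ (antidiagonal c).filter (fun p => p.1 ≠ 0 ∧ p.2 ≠ 0), f p := by
  rw [← sum_filter_not_add_sum_filter _ (fun p => p.1 ≠ 0 ∧ p.2 ≠ 0)]
  congr 1
  have hboundary : (antidiagonal c).filter (fun p => ¬(p.1 ≠ 0 ∧ p.2 ≠ 0)) = {(0, c), (c, 0)} := by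
    ext ⟨a, b⟩
    simp only [mem_filter, mem_antidiagonal, mem_insert, mem_singleton, Prod.mk.injEq]
    constructor
    · rintro ⟨rfl, h⟩
      by_cases ha : a = 0 <;> simp_all
    · rintro (⟨rfl, rfl⟩ | ⟨rfl, rfl⟩) <;> simp
  rw [hboundary, sum_pair (by simp [Prod.ext_iff, Ne.symm hc])]

end Finsupp

namespace RotheHagen

variable {ι K : Type*} [Field K]

def binom (c a : ι →₀ ℕ) : ℕ := ∏ i ∈ c.support, (c i).choose (a i)

theorem binom_eq_prod_of_subset {c a : ι →₀ ℕ} {s : Finset ι} (hs : c.support ⊆ s) (ha : a ≤ c) :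
    binom c a = ∏ i ∈ s, (c i).choose (a i) :=
  prod_subset hs fun i _ hi => by
    have hci : c i = 0 := notMem_support_iff.1 hi
    simp [hci, Nat.le_zero.1 (hci ▸ ha i)]

theorem binom_zero_right (c : ι →₀ ℕ) : binom c 0 = 1 := by
  simp [binom]

theorem binom_self (c : ι →₀ ℕ) : binom c c = 1 := by
  simp [binom]

theorem binom_symm {a b c : ι →₀ ℕ} (h : a + b = c) : binom c b = binom c a :=
  prod_congr rfl fun i _ => Nat.choose_symm_of_eq_add (by rw [← h, Finsupp.add_apply, add_comm])

section Families

variable (ω : ι → ℕ)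

noncomputable def rising (u : K) (a : ι →₀ ℕ) : K :=
  (ascPochhammer K (degree a)).eval (u + weight ω a)

-- A multi-index Gould polynomial: at `a = n • eᵢ` it is `n! · x / (x + zn) · C(x + zn, n)`,
-- `z = ω i + 1`.
noncomputable def gould (x : K) (a : ι →₀ ℕ) : K :=
  if degree a = 0 then 1 else x * (ascPochhammer K (degree a - 1)).eval (x + weight ω a + 1)

theorem rising_zero (u : K) : rising ω u 0 = 1 := by
  simp [rising]

theorem gould_zero (x : K) : gould ω x 0 = 1 := by
  simp [gould]

theorem rising_add_single (u : K) (a : ι →₀ ℕ) (i : ι) :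
    rising ω u (a + single i 1) = (u + ω i + weight ω a + degree a) * rising ω (u + ω i) a := by
  simp only [rising, map_add, degree_single, weight_single, one_smul, ascPochhammer_succ_eval]
  push_cast
  rw [← add_assoc, add_right_comm u]
  ring

theorem gould_add_single (x : K) (b : ι →₀ ℕ) (i : ι) :
    gould ω x (b + single i 1) = x * rising ω (x + 1 + ω i) b := by
  simp only [gould, rising, map_add, degree_single, weight_single, Nat.add_sub_cancel]
  rw [if_neg (by simp)]
  push_cast
  ring_nf

theorem mul_gould (y : K) (b : ι →₀ ℕ) :
    (y + weight ω b + degree b) * gould ω y b = y * rising ω (y + 1) b := by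
  cases hn : degree b with
  | zero => simp [gould, rising, (degree_eq_zero_iff b).1 hn]
  | succ n =>
    simp only [gould, rising, hn, Nat.succ_ne_zero, if_false, Nat.add_sub_cancel,
      ascPochhammer_succ_eval]
    push_cast
    rw [add_right_comm y 1]
    ring

theorem rising_add_one_sub (u : K) {a : ι →₀ ℕ} {s : Finset ι} (hs : a.support ⊆ s) :
    rising ω (u + 1) a - rising ω u a =
      ∑ j ∈ s, a j * rising ω (u + 1 + ω j) (a - single j 1) := by
  have hterm : ∀ j ∈ s, (a j : K) * rising ω (u + 1 + ω j) (a - single j 1) =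
      a j * (ascPochhammer K (degree a - 1)).eval (u + weight ω a + 1) := by
    intro j _
    rcases eq_or_ne (a j) 0 with h | h
    · simp [h]
    have hw := weight_sub_single_add (w := ω) h
    have hd := congrArg degree (sub_add_single_one_cancel h)
    rw [map_add, degree_single] at hd
    rw [rising, ← hw, ← hd, Nat.add_sub_cancel]
    push_cast
    ring_nf
  rw [sum_congr rfl hterm, ← Finset.sum_mul, ← Nat.cast_sum,
    ← sum_subset hs (fun j _ hj => notMem_support_iff.1 hj), ← degree_apply]
  cases hn : degree a with
  | zero => simp [rising, hn]
  | succ n =>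
    rw [rising, rising, hn, add_right_comm u, ascPochhammer_succ_eval_add_one, Nat.add_sub_cancel]
    push_cast
    ring

end Families

variable [DecidableEq ι]

theorem add_one_mul_binom_add_single {a c : ι →₀ ℕ} (ha : a ≤ c) (i : ι) :
    (a i + 1) * binom (c + single i 1) (a + single i 1) = (c i + 1) * binom c a := by
  have hs : (c + single i 1).support ⊆ insert i c.support :=
    support_add.trans (union_subset (subset_insert _ _) (support_single_subset.trans (by simp)))
  rw [binom_eq_prod_of_subset hs (add_le_add_left ha _),
    binom_eq_prod_of_subset (subset_insert _ _) ha,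
    ← Finset.mul_prod_erase _ _ (mem_insert_self i _),
    ← Finset.mul_prod_erase _ _ (mem_insert_self i _)]
  have hrest : ∏ j ∈ (insert i c.support).erase i,
      ((c + single i 1 : ι →₀ ℕ) j).choose ((a + single i 1 : ι →₀ ℕ) j)
      = ∏ j ∈ (insert i c.support).erase i, (c j).choose (a j) :=
    prod_congr rfl fun j hj => by simp [(ne_of_mem_erase hj).symm]
  rw [hrest, Finsupp.add_apply, Finsupp.add_apply, single_eq_same, ← mul_assoc, ← mul_assoc,
    Nat.add_one_mul_choose_eq]
  ring

noncomputable def binomConv (c : ι →₀ ℕ) (φ : (ι →₀ ℕ) → (ι →₀ ℕ) → K) : K :=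
  ∑ p ∈ antidiagonal c, binom c p.1 * φ p.1 p.2

section binomConv
variable {c : ι →₀ ℕ} {φ ψ : (ι →₀ ℕ) → (ι →₀ ℕ) → K}

theorem binomConv_zero (φ : (ι →₀ ℕ) → (ι →₀ ℕ) → K) : binomConv 0 φ = φ 0 0 := by
  simp [binomConv, binom]

theorem binomConv_congr (h : ∀ a b, a + b = c → φ a b = ψ a b) : binomConv c φ = binomConv c ψ :=
  sum_congr rfl fun p hp => by rw [h _ _ (mem_antidiagonal.1 hp)]

theorem binomConv_add : binomConv c (fun a b => φ a b + ψ a b) = binomConv c φ + binomConv c ψ := by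
  simp only [binomConv, mul_add, sum_add_distrib]

theorem binomConv_sub : binomConv c (fun a b => φ a b - ψ a b) = binomConv c φ - binomConv c ψ := by
  simp only [binomConv, mul_sub, sum_sub_distrib]

theorem binomConv_mul_left (k : K) : binomConv c (fun a b => k * φ a b) = k * binomConv c φ := by
  simp only [binomConv, Finset.mul_sum, mul_left_comm]

theorem binomConv_sum {κ : Type*} (s : Finset κ) (f : κ → (ι →₀ ℕ) → (ι →₀ ℕ) → K) :
    binomConv c (fun a b => ∑ k ∈ s, f k a b) = ∑ k ∈ s, binomConv c (f k) := by
  simp only [binomConv, Finset.mul_sum]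
  exact sum_comm

theorem binomConv_comm (c : ι →₀ ℕ) (φ : (ι →₀ ℕ) → (ι →₀ ℕ) → K) :
    binomConv c φ = binomConv c (fun a b => φ b a) :=
  (sum_antidiagonal_swap c fun a b => (binom c a : K) * φ a b).trans <|
    sum_congr rfl fun p hp => by rw [binom_symm (mem_antidiagonal.1 hp)]

end binomConv

section Leibniz
variable (c : ι →₀ ℕ) (i : ι) (φ : (ι →₀ ℕ) → (ι →₀ ℕ) → K)

theorem binomConv_add_single_apply_mul :
    binomConv (c + single i 1) (fun a b => a i * φ a b) =
      (c i + 1) * binomConv c (fun a b => φ (a + single i 1) b) := by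
  refine (sum_antidiagonal_add_single c i (f := fun a b => (binom (c + single i 1) a : K) *
    (a i * φ a b)) (by simp +contextual)).trans ?_
  rw [binomConv, Finset.mul_sum]
  refine sum_congr rfl fun p hp => ?_
  have h := congrArg (Nat.cast (R := K))
    (add_one_mul_binom_add_single (mem_antidiagonal.1 hp ▸ le_self_add) i)
  push_cast at h
  simp only [Finsupp.add_apply, single_eq_same, Nat.cast_add, Nat.cast_one]
  linear_combination φ (p.1 + single i 1) p.2 * h

theorem binomConv_add_single [CharZero K] :
    binomConv (c + single i 1) φ =
      binomConv c (fun a b => φ (a + single i 1) b + φ a (b + single i 1)) := by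
  have hci : (c i + 1 : K) ≠ 0 := by exact_mod_cast (c i).succ_ne_zero
  refine mul_left_cancel₀ hci ?_
  calc (c i + 1 : K) * binomConv (c + single i 1) φ
      = binomConv (c + single i 1) (fun a b => a i * φ a b) +
          binomConv (c + single i 1) (fun a b => b i * φ a b) := by
        rw [← binomConv_add, ← binomConv_mul_left]
        refine binomConv_congr fun a b h => ?_
        have hi : a i + b i = c i + 1 := by simpa using congrArg (· i) h
        rw [← add_mul]
        exact_mod_cast congrArg (fun n : ℕ => (n : K) * φ a b) hi.symm
    _ = (c i + 1) * binomConv c (fun a b => φ (a + single i 1) b + φ a (b + single i 1)) := by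
        rw [binomConv_comm (c + single i 1) (fun a b => b i * φ a b),
          binomConv_add_single_apply_mul, binomConv_add_single_apply_mul, binomConv_add,
          binomConv_comm c (fun a b => φ b (a + single i 1)), mul_add]

end Leibniz

section Identities

variable (ω : ι → ℕ)

theorem binomConv_rising_add_one_sub_mul (c : ι →₀ ℕ) (u : K) (ψ : (ι →₀ ℕ) → K) :
    binomConv c (fun a b => (rising ω (u + 1) a - rising ω u a) * ψ b) =
      ∑ i ∈ c.support,
        c i * binomConv (c - single i 1) (fun a b => rising ω (u + 1 + ω i) a * ψ b) := by
  have hexpand : binomConv c (fun a b => (rising ω (u + 1) a - rising ω u a) * ψ b) =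
      binomConv c (fun a b => ∑ i ∈ c.support,
        a i * (rising ω (u + 1 + ω i) (a - single i 1) * ψ b)) :=
    binomConv_congr fun a b h => by
      rw [rising_add_one_sub ω u (support_mono (h ▸ le_self_add)), Finset.sum_mul]
      simp only [mul_assoc]
  rw [hexpand, binomConv_sum]
  refine sum_congr rfl fun i hi => ?_
  have hci := mem_support_iff.1 hi
  have h := binomConv_add_single_apply_mul (c - single i 1) i
    (fun a b => rising ω (u + 1 + ω i) (a - single i 1) * ψ b)
  rw [sub_add_single_one_cancel hci] at h
  simp only [h, add_tsub_cancel_right, tsub_apply, single_eq_same]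
  rw [← Nat.cast_add_one, Nat.sub_add_cancel (Nat.one_le_iff_ne_zero.2 hci)]

theorem binomConv_mul_rising_add_one_sub (c : ι →₀ ℕ) (u : K) (ψ : (ι →₀ ℕ) → K) :
    binomConv c (fun a b => ψ a * (rising ω (u + 1) b - rising ω u b)) =
      ∑ i ∈ c.support,
        c i * binomConv (c - single i 1) (fun a b => ψ a * rising ω (u + 1 + ω i) b) := by
  calc _ = binomConv c (fun a b => (rising ω (u + 1) a - rising ω u a) * ψ b) :=
        (binomConv_comm _ _).trans (binomConv_congr fun _ _ _ => mul_comm _ _)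
    _ = _ := binomConv_rising_add_one_sub_mul ω c u ψ
    _ = _ := sum_congr rfl fun i _ => by
        rw [binomConv_comm]
        exact congrArg _ (binomConv_congr fun _ _ _ => mul_comm _ _)

theorem binomConv_rising_add_natCast (c : ι →₀ ℕ) (m : ℕ) (X Y : K) :
    binomConv c (fun a b => rising ω (X + m) a * rising ω Y b) =
      binomConv c (fun a b => rising ω X a * rising ω (Y + m) b) := by
  induction c using induction_sub_single_one generalizing m X Y with
  | ind c ih =>
  have hstep : ∀ X Y : K, binomConv c (fun a b => rising ω (X + 1) a * rising ω Y b) =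
      binomConv c (fun a b => rising ω X a * rising ω (Y + 1) b) := by
    intro X Y
    rw [← sub_eq_zero, ← sub_sub_sub_cancel_right _ _
      (binomConv c (fun a b => rising ω X a * rising ω Y b)), ← binomConv_sub, ← binomConv_sub]
    simp only [← sub_mul, ← mul_sub]
    rw [binomConv_rising_add_one_sub_mul, binomConv_mul_rising_add_one_sub, ← sum_sub_distrib]
    refine sum_eq_zero fun i hi => ?_
    have h := ih i (mem_support_iff.1 hi) (1 + ω i) X Y
    push_cast [← add_assoc] at h
    rw [h, sub_self]
  induction m generalizing X Y with
  | zero => simp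
  | succ m ihm =>
    push_cast
    rw [← add_assoc, ← add_assoc, hstep, ihm, add_right_comm Y 1]

theorem binomConv_rising_gould [CharZero K] (c : ι →₀ ℕ) (u y : K) :
    binomConv c (fun a b => rising ω u a * gould ω y b) = rising ω (u + y) c := by
  induction c using induction_sub_single_one generalizing u with
  | ind c ih =>
  rcases eq_or_ne c 0 with rfl | hc
  · simp [binomConv_zero, rising_zero, gould_zero]
  obtain ⟨i, hi⟩ := Finsupp.ne_iff.1 hc
  have ih := ih i hi
  rw [← sub_add_single_one_cancel hi]
  generalize c - single i 1 = c at ih ⊢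
  calc binomConv (c + single i 1) (fun a b => rising ω u a * gould ω y b)
      = binomConv c (fun a b =>
          (u + ω i + y + weight ω c + degree c) * (rising ω (u + ω i) a * gould ω y b) -
          y * (rising ω (u + ω i) a * rising ω (y + 1) b) +
          y * (rising ω u a * rising ω (y + 1 + ω i) b)) := by
        rw [binomConv_add_single]
        refine binomConv_congr fun a b hab => ?_
        have hw : (weight ω a : K) + weight ω b = weight ω c := by
          rw [← hab, map_add, Nat.cast_add]
        have hd : ((degree a : ℕ) : K) + (degree b : ℕ) = (degree c : ℕ) := by
          rw [← hab, map_add, Nat.cast_add]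
        rw [rising_add_single, gould_add_single]
        linear_combination (-rising ω (u + ω i) a) * mul_gould ω y b +
          (rising ω (u + ω i) a * gould ω y b) * (hw + hd)
    _ = (u + ω i + y + weight ω c + degree c) * rising ω (u + ω i + y) c -
          y * binomConv c (fun a b => rising ω (u + ω i) a * rising ω (y + 1) b) +
          y * binomConv c (fun a b => rising ω u a * rising ω (y + 1 + ω i) b) := by
        rw [binomConv_add, binomConv_sub, binomConv_mul_left, binomConv_mul_left,
          binomConv_mul_left, ih]
    _ = rising ω (u + y) (c + single i 1) := by
        rw [binomConv_rising_add_natCast, add_right_comm y, sub_add_cancel, rising_add_single,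
          add_right_comm u]

theorem binomConv_gould [CharZero K] (c : ι →₀ ℕ) (x y : K) :
    binomConv c (fun a b => gould ω x a * gould ω y b) = gould ω (x + y) c := by
  rcases eq_or_ne c 0 with rfl | hc
  · simp [binomConv_zero, gould_zero]
  obtain ⟨i, hi⟩ := Finsupp.ne_iff.1 hc
  rw [← sub_add_single_one_cancel hi]
  generalize c - single i 1 = c
  calc binomConv (c + single i 1) (fun a b => gould ω x a * gould ω y b)
      = x * binomConv c (fun a b => rising ω (x + 1 + ω i) a * gould ω y b) +
          y * binomConv c (fun a b => rising ω (y + 1 + ω i) a * gould ω x b) := by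
        rw [binomConv_add_single, binomConv_comm c (fun a b => rising ω (y + 1 + ω i) a * _),
          ← binomConv_mul_left, ← binomConv_mul_left, ← binomConv_add]
        refine binomConv_congr fun a b _ => ?_
        rw [gould_add_single, gould_add_single]
        ring
    _ = gould ω (x + y) (c + single i 1) := by
        rw [binomConv_rising_gould, binomConv_rising_gould, gould_add_single,
          show y + 1 + ω i + x = x + y + 1 + ω i by ring,
          show x + 1 + ω i + y = x + y + 1 + ω i by ring, add_mul]

theorem sum_filter_binom_mul_gould [CharZero K] {c : ι →₀ ℕ} (hc : c ≠ 0) (x y : K) :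
    ∑ p ∈ (antidiagonal c).filter (fun p => p.1 ≠ 0 ∧ p.2 ≠ 0),
      (binom c p.1 : K) * (gould ω x p.1 * gould ω y p.2) =
        gould ω (x + y) c - gould ω x c - gould ω y c := by
  have h := binomConv_gould ω c x y
  rw [binomConv, sum_antidiagonal_eq_add_add_sum_filter hc] at h
  simp only [binom_zero_right, binom_self, gould_zero, Nat.cast_one, one_mul, mul_one] at h
  linear_combination h

theorem sum_filter_binom_mul_gould_neg_one [CharZero K] {c : ι →₀ ℕ} {n : ℕ}
    (hc : degree c = n + 2) :
    ∑ p ∈ (antidiagonal c).filter (fun p => p.1 ≠ 0 ∧ p.2 ≠ 0),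
      (binom c p.1 : K) * (gould ω (-1) p.1 * gould ω (-1) p.2) =
        2 * (n + 1) * (ascPochhammer K n).eval (weight ω c : K) := by
  have hc0 : c ≠ 0 := by
    rintro rfl
    simp at hc
  have hdiff := ascPochhammer_succ_eval_add_one n ((weight ω c : K) - 1)
  rw [sub_add_cancel] at hdiff
  have hgould : ∀ x : K, gould ω x c = x * (ascPochhammer K (n + 1)).eval (x + weight ω c + 1) :=
    fun x => by simp [gould, hc]
  rw [sum_filter_binom_mul_gould ω hc0, hgould, hgould,
    show (-1 + -1 + (weight ω c : K) + 1) = weight ω c - 1 by ring,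
    show (-1 + (weight ω c : K) + 1) = weight ω c by ring]
  linear_combination 2 * hdiff

end Identities

end RotheHagen

open RotheHagen

theorem stmt9sz_eq_degree (d : ℕ →₀ ℕ) : stmt9sz d = degree d := rfl

theorem stmt9wt_eq_weight (d : ℕ →₀ ℕ) : stmt9wt d = weight (fun i => i + 1) d := by
  simp [stmt9wt, weight_apply, mul_comm]

theorem stmt9sz_le_stmt9wt (d : ℕ →₀ ℕ) : stmt9sz d ≤ stmt9wt d :=
  Finset.sum_le_sum fun i _ => Nat.le_mul_of_pos_left _ i.succ_pos

theorem factorial_div_factorial_eq_neg_gould {a : ℕ →₀ ℕ} (ha : a ≠ 0) :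
    ((stmt9wt a + stmt9sz a - 2).factorial : ℚ) / (stmt9wt a - 1).factorial =
      -gould (fun i => i + 1) (-1) a := by
  obtain ⟨n, hn⟩ := Nat.exists_eq_add_one_of_ne_zero ((degree_eq_zero_iff a).not.2 ha)
  rw [← stmt9sz_eq_degree] at hn
  obtain ⟨w, hw⟩ := Nat.exists_eq_add_of_le' (by linarith [stmt9sz_le_stmt9wt a] : 1 ≤ stmt9wt a)
  rw [gould, ← stmt9sz_eq_degree, ← stmt9wt_eq_weight, hw, hn, if_neg n.succ_ne_zero,
    show w + 1 + (n + 1) - 2 = w + n by omega, Nat.add_sub_cancel, Nat.add_sub_cancel,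
    factorial_add_div_factorial, show (-1 : ℚ) + ((w + 1 : ℕ) : ℚ) + 1 = w + 1 by push_cast; ring,
    neg_one_mul, neg_neg]

theorem prod_choose_mul_factorial_div_eq {c a b : ℕ →₀ ℕ} (ha : a ≠ 0) (hb : b ≠ 0) :
    (∏ i ∈ c.support, ((c i).choose (a i) : ℚ)) *
        (((stmt9wt a + stmt9sz a - 2).factorial : ℚ) *
          ((stmt9wt b + stmt9sz b - 2).factorial : ℚ)) /
        (((stmt9wt a - 1).factorial : ℚ) * ((stmt9wt b - 1).factorial : ℚ)) =
      (binom c a : ℚ) * (gould (fun i => i + 1) (-1) a * gould (fun i => i + 1) (-1) b) := by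
  rw [mul_div_assoc, mul_div_mul_comm, factorial_div_factorial_eq_neg_gould ha,
    factorial_div_factorial_eq_neg_gould hb, binom, Nat.cast_prod, neg_mul_neg]

/-- Proposition A.3: for `c ∈ ℕ^∞` with `‖c‖ ≥ 2`,
`(|c| + ‖c‖ - 3)!/(|c| - 1)! ⬝ (‖c‖ - 1)
  = (1/2) ∑_{c = a + b, a,b ≠ 0} binom(c; a, b)
      (|a| + ‖a‖ - 2)! (|b| + ‖b‖ - 2)! / ((|a| - 1)! (|b| - 1)!)`,
where `binom(c;a,b) = ∏ᵢ C(cᵢ, aᵢ)` and the sum is over ordered decompositions. -/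
theorem stmt9 (c : ℕ →₀ ℕ) (hc : 2 ≤ stmt9sz c) :
    (((stmt9wt c + stmt9sz c - 3).factorial : ℚ) / ((stmt9wt c - 1).factorial : ℚ))
        * ((stmt9sz c : ℚ) - 1)
      = (1 / 2) * ∑ p ∈ (Finset.HasAntidiagonal.antidiagonal c).filter (fun p => p.1 ≠ 0 ∧ p.2 ≠ 0),
          (∏ i ∈ c.support, ((c i).choose (p.1 i) : ℚ)) *
            (((stmt9wt p.1 + stmt9sz p.1 - 2).factorial : ℚ) *
              ((stmt9wt p.2 + stmt9sz p.2 - 2).factorial : ℚ)) /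
            (((stmt9wt p.1 - 1).factorial : ℚ) * ((stmt9wt p.2 - 1).factorial : ℚ)) := by
  obtain ⟨n, hn⟩ := Nat.exists_eq_add_of_le' hc
  obtain ⟨w, hw⟩ := Nat.exists_eq_add_of_le' (one_le_two.trans (hc.trans (stmt9sz_le_stmt9wt c)))
  rw [sum_congr rfl fun p hp =>
      prod_choose_mul_factorial_div_eq (mem_filter.1 hp).2.1 (mem_filter.1 hp).2.2,
    sum_filter_binom_mul_gould_neg_one _ hn, ← stmt9wt_eq_weight, hw, hn,
    show w + 1 + (n + 2) - 3 = w + n by omega, Nat.add_sub_cancel, factorial_add_div_factorial]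
  push_cast
  ring
end

section
/- Let $b_1 = \frac{1}{36}$ and define $(b_m)_{m\ge 1}$ recursively by $(2m-2) b_m = \sum_{i=1}^{m-1} (5i-1)(3m-3i+1)\, b_i\, b_{m-i}$ for $m \ge 2$. Then the formal power series $y(x) = \sum_{i\ge 1} b_i x^i$ satisfies $15 x^2 (y')^2 + (2xy - 2x) y' - y^2 + 2y = 0$, where $y'$ denotes the formal derivative. -/
/-! Writing `θ = X d/dX`, the left-hand side is `15 (θy)² + 2 y θy - 2 θy - y² + 2y`, whose
coefficient of `Xⁿ` is `∑_{i+j=n} (15ij + 2j - 1) b_i b_j + (2 - 2n) b_n`. Since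
`∑_{i+j=n} (i - j) b_i b_j` vanishes by the symmetry `i ↔ j`, the weight may be replaced by
`(5i - 1)(3j + 1)`, and then the recursion (trivially true for `n ≤ 1` because `b 0 = 0`) says
exactly that the coefficient is zero. -/

open PowerSeries Finset

theorem PowerSeries.coeff_X_mul_derivative {R : Type*} [CommSemiring R] (f : R⟦X⟧) (n : ℕ) :
    coeff n (X * d⁄dX R f) = n * coeff n f := by
  cases n with
  | zero => simp
  | succ n => rw [coeff_succ_X_mul, coeff_derivative, mul_comm]; push_cast; rfl

theorem PowerSeries.coeff_ofNat_mul {R : Type*} [Semiring R] (k : ℕ) [k.AtLeastTwo] (f : R⟦X⟧)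
    (n : ℕ) : coeff n (OfNat.ofNat k * f) = OfNat.ofNat k * coeff n f := by
  rw [← map_ofNat C k, coeff_C_mul]

theorem Finset.Nat.sum_antidiagonal_sub_mul_mul_eq_zero {K : Type*} [Field K] [CharZero K]
    (f : ℕ → K) (n : ℕ) :
    ∑ p ∈ antidiagonal n, ((p.1 : K) - p.2) * (f p.1 * f p.2) = 0 := by
  rw [← CharZero.eq_neg_self_iff, ← sum_neg_distrib, ← Nat.sum_antidiagonal_swap]
  refine sum_congr rfl fun p _ => ?_
  simp only [Prod.fst_swap, Prod.snd_swap]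
  ring

theorem Finset.Nat.sum_antidiagonal_eq_sum_Icc_of_boundary_eq_zero {M : Type*} [AddCommMonoid M]
    (f : ℕ → ℕ → M) (n : ℕ) (hf₀ : f 0 n = 0) (hf₁ : f n 0 = 0) :
    ∑ p ∈ antidiagonal n, f p.1 p.2 = ∑ i ∈ Icc 1 (n - 1), f i (n - i) := by
  rw [Nat.sum_antidiagonal_eq_sum_range_succ]
  symm
  refine sum_subset (fun i hi => ?_) (fun i hi hi' => ?_)
  · simp only [mem_Icc] at hi; simp only [mem_range]; omega
  · simp only [mem_Icc, mem_range] at hi hi'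
    obtain rfl | rfl : i = 0 ∨ i = n := by omega
    · simpa using hf₀
    · simpa using hf₁

theorem coeff_ode_lhs {R : Type*} [CommRing R] (y : R⟦X⟧) (n : ℕ) :
    coeff n (15 * (X * d⁄dX R y) ^ 2 + 2 * y * (X * d⁄dX R y) - 2 * (X * d⁄dX R y)
        - y ^ 2 + 2 * y)
      = ∑ p ∈ antidiagonal n, (15 * (p.1 : R) * p.2 + 2 * p.2 - 1) * (coeff p.1 y * coeff p.2 y)
        + (2 - 2 * n) * coeff n y := by
  set θ := X * d⁄dX R y
  have hθ (k : ℕ) : coeff k θ = k * coeff k y := coeff_X_mul_derivative y k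
  rw [map_add, map_sub, map_sub, map_add, mul_assoc, coeff_ofNat_mul, coeff_ofNat_mul,
    coeff_ofNat_mul, coeff_ofNat_mul, hθ, pow_two, pow_two, coeff_mul, coeff_mul, coeff_mul]
  simp only [hθ]
  have hsplit : ∑ p ∈ antidiagonal n,
        (15 * (p.1 : R) * p.2 + 2 * p.2 - 1) * (coeff p.1 y * coeff p.2 y)
      = ∑ p ∈ antidiagonal n, 15 * (p.1 * coeff p.1 y * (p.2 * coeff p.2 y))
        + ∑ p ∈ antidiagonal n, 2 * (coeff p.1 y * (p.2 * coeff p.2 y))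
        - ∑ p ∈ antidiagonal n, coeff p.1 y * coeff p.2 y := by
    rw [← sum_add_distrib, ← sum_sub_distrib]
    exact sum_congr rfl fun _ _ => by ring
  rw [hsplit, ← mul_sum, ← mul_sum]
  ring

theorem sum_antidiagonal_ode_weight_eq_recursion_weight {K : Type*} [Field K] [CharZero K]
    (b : ℕ → K) (n : ℕ) :
    ∑ p ∈ antidiagonal n, (15 * (p.1 : K) * p.2 + 2 * p.2 - 1) * (b p.1 * b p.2)
      = ∑ p ∈ antidiagonal n, (5 * (p.1 : K) - 1) * (3 * p.2 + 1) * (b p.1 * b p.2) := by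
  have h := Nat.sum_antidiagonal_sub_mul_mul_eq_zero b n
  symm
  rw [← sub_eq_zero, ← sum_sub_distrib, ← mul_zero (5 : K), ← h, mul_sum]
  refine sum_congr rfl fun p _ => ?_
  ring

theorem sum_antidiagonal_eq_of_recursion (b : ℕ → ℚ) (hb0 : b 0 = 0)
    (hrec : ∀ m : ℕ, 2 ≤ m →
      (2 * (m : ℚ) - 2) * b m
        = ∑ i ∈ Finset.Icc 1 (m - 1),
            (5 * (i : ℚ) - 1) * (3 * (m : ℚ) - 3 * (i : ℚ) + 1) * b i * b (m - i)) (m : ℕ) :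
    ∑ p ∈ antidiagonal m, (5 * (p.1 : ℚ) - 1) * (3 * p.2 + 1) * (b p.1 * b p.2)
      = (2 * m - 2) * b m := by
  rw [Nat.sum_antidiagonal_eq_sum_Icc_of_boundary_eq_zero
    (fun i j => (5 * (i : ℚ) - 1) * (3 * j + 1) * (b i * b j)) m (by simp [hb0]) (by simp [hb0])]
  rcases lt_or_ge m 2 with hm | hm
  · interval_cases m <;> simp [hb0]
  rw [hrec m hm]
  refine sum_congr rfl fun i hi => ?_
  rw [Nat.cast_sub (by simp only [mem_Icc] at hi; omega)]
  ring

theorem stmt10_general (b : ℕ → ℚ) (hb0 : b 0 = 0)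
    (hrec : ∀ m : ℕ, 2 ≤ m →
      (2 * (m : ℚ) - 2) * b m
        = ∑ i ∈ Finset.Icc 1 (m - 1),
            (5 * (i : ℚ) - 1) * (3 * (m : ℚ) - 3 * (i : ℚ) + 1) * b i * b (m - i)) :
    15 * X ^ 2 * (PowerSeries.mk b).derivativeFun ^ 2
        + (2 * X * PowerSeries.mk b - 2 * X) * (PowerSeries.mk b).derivativeFun
        - (PowerSeries.mk b) ^ 2 + 2 * PowerSeries.mk b = 0 := by
  have hD : (PowerSeries.mk b).derivativeFun = d⁄dX ℚ (PowerSeries.mk b) := rfl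
  set y := PowerSeries.mk b
  calc _ = 15 * (X * d⁄dX ℚ y) ^ 2 + 2 * y * (X * d⁄dX ℚ y) - 2 * (X * d⁄dX ℚ y)
        - y ^ 2 + 2 * y := by rw [hD]; ring
    _ = 0 := by
      ext n
      simp only [coeff_ode_lhs, y, coeff_mk]
      rw [sum_antidiagonal_ode_weight_eq_recursion_weight,
        sum_antidiagonal_eq_of_recursion b hb0 hrec, map_zero]
      ring

/-- §4: with `b₁ = 1/36` and `(2m-2) b_m = ∑_{i=1}^{m-1} (5i-1)(3m-3i+1) b_i b_{m-i}`
for `m ≥ 2`, the series `y(x) = ∑_{i ≥ 1} b_i x^i` satisfies the ODE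
`15 x² (y')² + (2xy - 2x) y' - y² + 2y = 0` (formal derivative). -/
theorem stmt10 (b : ℕ → ℚ) (hb0 : b 0 = 0) (hb1 : b 1 = 1 / 36)
    (hrec : ∀ m : ℕ, 2 ≤ m →
      (2 * (m : ℚ) - 2) * b m
        = ∑ i ∈ Finset.Icc 1 (m - 1),
            (5 * (i : ℚ) - 1) * (3 * (m : ℚ) - 3 * (i : ℚ) + 1) * b i * b (m - i)) :
    15 * X ^ 2 * (PowerSeries.mk b).derivativeFun ^ 2
        + (2 * X * PowerSeries.mk b - 2 * X) * (PowerSeries.mk b).derivativeFun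
        - (PowerSeries.mk b) ^ 2 + 2 * PowerSeries.mk b = 0 :=
  stmt10_general b hb0 hrec
end

section
/- For the partition-indexed generating function identity: $\sum_{\mu:\, \ell(\mu) \ge 2} \frac{(|\mu| + \ell(\mu) - 3)!\, (\ell(\mu)-1)\, p_\mu}{(|\mu|-1)!\, z_\mu} = \frac{1}{2}\left(\sum_{\mu \ne \emptyset} \frac{(|\mu| + \ell(\mu) - 2)!\, p_\mu}{(|\mu|-1)!\, z_\mu}\right)^2$, as an identity of formal power series in the variables $p_1, p_2, \dots$. -/
/-- Monomials in the variables `p₁, p₂, …` are indexed by exponent vectors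
`d : ℕ →₀ ℕ`, where `d j` is the exponent of `p_{j+1}`.  A partition `μ` with
`m_j(μ)` parts equal to `j` corresponds to the exponent `d` with `d j = m_{j+1}(μ)`;
then `|μ| = ∑ (j+1) d j`, `ℓ(μ) = ∑ d j`, and `z_μ = ∏ (d j)! (j+1)^{d j}`. -/
def stmt16wt (d : ℕ →₀ ℕ) : ℕ := d.sum fun j m => (j + 1) * m

def stmt16len (d : ℕ →₀ ℕ) : ℕ := d.sum fun _ m => m

def stmt16z (d : ℕ →₀ ℕ) : ℕ := d.prod fun j m => m.factorial * (j + 1) ^ m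

/-- LHS: `∑_{ℓ(μ) ≥ 2} (|μ|+ℓ(μ)-3)! (ℓ(μ)-1) p_μ / ((|μ|-1)! z_μ)` as a
multivariate power series in `p₁, p₂, …`. -/
def stmt16L : MvPowerSeries ℕ ℚ := fun d =>
  if 2 ≤ stmt16len d then
    ((stmt16wt d + stmt16len d - 3).factorial : ℚ) * ((stmt16len d : ℚ) - 1)
      / (((stmt16wt d - 1).factorial : ℚ) * (stmt16z d : ℚ))
  else 0

/-- `∑_{μ ≠ ∅} (|μ|+ℓ(μ)-2)! p_μ / ((|μ|-1)! z_μ)`. -/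
def stmt16S : MvPowerSeries ℕ ℚ := fun d =>
  if d ≠ 0 then
    ((stmt16wt d + stmt16len d - 2).factorial : ℚ)
      / (((stmt16wt d - 1).factorial : ℚ) * (stmt16z d : ℚ))
  else 0

/-!
For `d ≠ 0` put `q_d(x) = x (x + |d| + 1) (x + |d| + 2) ⋯ (x + |d| + ℓ(d) - 1)` (`abelCoeff`),
`q_0 = 1`, and `Q(x) = ∑_d q_d(x) p^d / z_d` (`abelSeries`). Then `Q(x + y) = Q(x) Q(y)` for
integers `x, y`: both sides agree at `x = 0`, and removing one part of size `j + 1` from `d` gives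
the difference equation `q_d(x) - q_d(x - 1) = ∑_j d_j q_{d - e_j}(x + j + 1)`, so by induction on
`d` the difference of the two sides is `1`-periodic in `x`. Since `S = 1 - Q(-1)` and
`2 L = Q(-2) - 2 Q(-1) + 1`, the theorem is `(1 - Q(-1))² = Q(-1)² - 2 Q(-1) + 1`.
-/

open Finset Finsupp MvPowerSeries

section SubSingle

variable {σ : Type*}

lemma Finsupp.single_one_le_of_ne_zero {d : σ →₀ ℕ} {j : σ} (hj : d j ≠ 0) : single j 1 ≤ d :=
  single_le_iff.mpr (Nat.one_le_iff_ne_zero.mpr hj)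

lemma Finsupp.sub_single_one_lt {d : σ →₀ ℕ} {j : σ} (hj : d j ≠ 0) : d - single j 1 < d := by
  refine lt_of_le_of_ne tsub_le_self fun h => hj ?_
  have := DFunLike.congr_fun h j
  simp only [tsub_apply, single_eq_same] at this
  omega

lemma Finsupp.sum_antidiagonal_sum_support_fst {M : Type*} [DecidableEq σ] [AddCommMonoid M]
    (d : σ →₀ ℕ) (f : σ → (σ →₀ ℕ) → (σ →₀ ℕ) → M) :
    ∑ p ∈ antidiagonal d, ∑ j ∈ p.1.support, f j (p.1 - single j 1) p.2 =
      ∑ j ∈ d.support, ∑ q ∈ antidiagonal (d - single j 1), f j q.1 q.2 := by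
  rw [Finset.sum_sigma', Finset.sum_sigma']
  refine Finset.sum_bij' (fun x _ => ⟨x.2, (x.1.1 - single x.2 1, x.1.2)⟩)
    (fun y _ => ⟨(y.2.1 + single y.1 1, y.2.2), y.1⟩) ?_ ?_ ?_ ?_ (fun _ _ => rfl)
  · rintro ⟨⟨a, b⟩, j⟩ hx
    simp only [mem_sigma, HasAntidiagonal.mem_antidiagonal, mem_support_iff] at hx ⊢
    obtain ⟨rfl, hj⟩ := hx
    exact ⟨by simp [hj], by rw [tsub_add_eq_add_tsub (single_one_le_of_ne_zero hj)]⟩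
  · rintro ⟨j, ⟨a, b⟩⟩ hy
    simp only [mem_sigma, HasAntidiagonal.mem_antidiagonal, mem_support_iff] at hy ⊢
    obtain ⟨hj, hab⟩ := hy
    refine ⟨?_, by simp⟩
    rw [add_right_comm, hab, tsub_add_cancel_of_le (single_one_le_of_ne_zero hj)]
  · rintro ⟨⟨a, b⟩, j⟩ hx
    simp only [mem_sigma, HasAntidiagonal.mem_antidiagonal, mem_support_iff] at hx
    simp [tsub_add_cancel_of_le (single_one_le_of_ne_zero hx.2)]
  · rintro ⟨j, ⟨a, b⟩⟩ -
    simp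

end SubSingle

lemma stmt16z_pos (d : ℕ →₀ ℕ) : 0 < stmt16z d :=
  Finset.prod_pos fun _ _ => by positivity

section Statistics

variable {d : ℕ →₀ ℕ} {j : ℕ}

lemma stmt16len_eq_degree : stmt16len d = degree d := rfl

lemma stmt16wt_eq_weight : stmt16wt d = weight (fun j => j + 1) d := by
  simp only [stmt16wt, weight_apply, smul_eq_mul, mul_comm]

lemma stmt16len_eq_zero_iff : stmt16len d = 0 ↔ d = 0 :=
  degree_eq_zero_iff d

lemma stmt16len_cast_eq_sum : (stmt16len d : ℚ) = ∑ j ∈ d.support, (d j : ℚ) := by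
  simp [stmt16len, Finsupp.sum]

lemma stmt16wt_cast_eq_sum : (stmt16wt d : ℚ) = ∑ j ∈ d.support, (d j : ℚ) * (j + 1) := by
  simp [stmt16wt, Finsupp.sum, mul_comm]

lemma stmt16len_sub_single_add_one (hj : d j ≠ 0) :
    stmt16len (d - single j 1) + 1 = stmt16len d := by
  conv_rhs => rw [← tsub_add_cancel_of_le (single_one_le_of_ne_zero hj)]
  simp [stmt16len_eq_degree]

lemma stmt16wt_sub_single_add (hj : d j ≠ 0) :
    stmt16wt (d - single j 1) + (j + 1) = stmt16wt d := by
  conv_rhs => rw [← tsub_add_cancel_of_le (single_one_le_of_ne_zero hj)]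
  simp [stmt16wt_eq_weight, weight_single]

lemma stmt16z_eq_mul_sub_single (hj : d j ≠ 0) :
    stmt16z d = d j * (j + 1) * stmt16z (d - single j 1) := by
  have herase : (d - single j 1).erase j = d.erase j := by
    ext k; by_cases hk : k = j <;> simp [hk, Finsupp.erase_ne]
  obtain ⟨n, hn⟩ : ∃ n, d j = n + 1 := ⟨d j - 1, by omega⟩
  simp only [stmt16z]
  rw [← mul_prod_erase' d j _ (by simp), ← mul_prod_erase' (d - single j 1) j _ (by simp),
    herase, tsub_apply, single_eq_same, hn, Nat.factorial_succ, pow_succ, Nat.add_sub_cancel]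
  ring

lemma one_le_stmt16len (hd : d ≠ 0) : 1 ≤ stmt16len d := by
  obtain ⟨j, hj⟩ := DFunLike.ne_iff.mp hd
  rw [← stmt16len_sub_single_add_one hj]; omega

lemma one_le_stmt16wt (hd : d ≠ 0) : 1 ≤ stmt16wt d := by
  obtain ⟨j, hj⟩ := DFunLike.ne_iff.mp hd
  rw [← stmt16wt_sub_single_add hj]; omega

lemma stmt16len_eq_one_or_eq_add_two (hd : d ≠ 0) :
    stmt16len d = 1 ∨ ∃ m, stmt16len d = m + 2 :=
  (eq_or_lt_of_le (one_le_stmt16len hd)).imp Eq.symm fun _ => ⟨stmt16len d - 2, by omega⟩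

end Statistics

lemma ascPochhammer_succ_eval_left {S : Type*} [CommSemiring S] (n : ℕ) (a : S) :
    (ascPochhammer S (n + 1)).eval a = a * (ascPochhammer S n).eval (a + 1) := by
  simp [ascPochhammer_succ_left, Polynomial.eval_comp]

lemma factorial_mul_ascPochhammer_eval {S : Type*} [Semiring S] {w : ℕ} (hw : 1 ≤ w) (k : ℕ) :
    ((w - 1).factorial : S) * (ascPochhammer S k).eval (w : S) = (w + k - 1).factorial := by
  rw [ascPochhammer_nat_eq_natCast_ascFactorial, ← Nat.cast_mul,
    Nat.factorial_mul_ascFactorial' w k hw]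

noncomputable def abelCoeff (x : ℚ) (d : ℕ →₀ ℕ) : ℚ :=
  if d = 0 then 1 else x * (ascPochhammer ℚ (stmt16len d - 1)).eval (x + stmt16wt d + 1)

lemma abelCoeff_of_ne_zero (x : ℚ) {d : ℕ →₀ ℕ} (hd : d ≠ 0) :
    abelCoeff x d = x * (ascPochhammer ℚ (stmt16len d - 1)).eval (x + stmt16wt d + 1) :=
  if_neg hd

lemma abelCoeff_sub_abelCoeff_sub_one (x : ℚ) {d : ℕ →₀ ℕ} (hd : d ≠ 0) :
    abelCoeff x d - abelCoeff (x - 1) d =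
      ∑ j ∈ d.support, (d j : ℚ) * abelCoeff (x + j + 1) (d - single j 1) := by
  have hlen : ∀ j ∈ d.support, stmt16len (d - single j 1) + 1 = stmt16len d := fun j hj =>
    stmt16len_sub_single_add_one (mem_support_iff.mp hj)
  rw [abelCoeff_of_ne_zero _ hd, abelCoeff_of_ne_zero _ hd]
  obtain hl | ⟨m, hm⟩ := stmt16len_eq_one_or_eq_add_two hd
  · have hterm : ∀ j ∈ d.support,
        (d j : ℚ) * abelCoeff (x + j + 1) (d - single j 1) = d j := fun j hj => by
      have : d - single j 1 = 0 := stmt16len_eq_zero_iff.mp (by have := hlen j hj; omega)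
      simp [this, abelCoeff]
    rw [sum_congr rfl hterm, ← stmt16len_cast_eq_sum, hl]
    simp
  set P := (ascPochhammer ℚ m).eval (x + stmt16wt d + 1)
  have hterm : ∀ j ∈ d.support, (d j : ℚ) * abelCoeff (x + j + 1) (d - single j 1) =
      (x * d j + d j * (j + 1)) * P := fun j hj => by
    have hlen_j := hlen j hj
    have hne : d - single j 1 ≠ 0 := fun h0 => by
      rw [h0, stmt16len_eq_zero_iff.mpr rfl] at hlen_j; omega
    have hwt : (x + j + 1) + stmt16wt (d - single j 1) + 1 = x + stmt16wt d + 1 := by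
      rw [← stmt16wt_sub_single_add (mem_support_iff.mp hj)]; push_cast; ring
    rw [abelCoeff_of_ne_zero _ hne, hwt, show stmt16len (d - single j 1) - 1 = m by omega]
    ring
  rw [sum_congr rfl hterm, ← Finset.sum_mul, sum_add_distrib, ← Finset.mul_sum,
    ← stmt16len_cast_eq_sum, ← stmt16wt_cast_eq_sum, hm, show m + 2 - 1 = m + 1 by omega,
    ascPochhammer_succ_eval, ascPochhammer_succ_eval_left,
    show x - 1 + stmt16wt d + 1 + 1 = x + stmt16wt d + 1 by ring]
  push_cast
  ring
noncomputable def abelSeries (x : ℚ) : MvPowerSeries ℕ ℚ := fun d => abelCoeff x d / stmt16z d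

lemma coeff_abelSeries (x : ℚ) (d : ℕ →₀ ℕ) :
    coeff d (abelSeries x) = abelCoeff x d / stmt16z d := rfl

lemma abelSeries_zero : abelSeries 0 = 1 := by
  ext d
  by_cases hd : d = 0
  · simp [hd, coeff_abelSeries, abelCoeff, stmt16z]
  · simp [hd, coeff_abelSeries, abelCoeff_of_ne_zero, coeff_one]

lemma coeff_abelSeries_sub (x : ℚ) (d : ℕ →₀ ℕ) :
    coeff d (abelSeries x) - coeff d (abelSeries (x - 1)) =
      ∑ j ∈ d.support,
        (j + 1 : ℚ)⁻¹ * coeff (d - single j 1) (abelSeries (x + j + 1)) := by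
  by_cases hd : d = 0
  · simp [hd, coeff_abelSeries, abelCoeff]
  rw [coeff_abelSeries, coeff_abelSeries, ← sub_div, abelCoeff_sub_abelCoeff_sub_one x hd,
    sum_div]
  refine sum_congr rfl fun j hj => ?_
  have hdj := mem_support_iff.mp hj
  have hz := (stmt16z_pos (d - single j 1)).ne'
  rw [coeff_abelSeries, stmt16z_eq_mul_sub_single hdj]
  push_cast
  field_simp

lemma coeff_abelSeries_mul_sub (x y : ℚ) (d : ℕ →₀ ℕ) :
    coeff d (abelSeries x * abelSeries y) - coeff d (abelSeries (x - 1) * abelSeries y) =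
      ∑ j ∈ d.support,
        (j + 1 : ℚ)⁻¹ * coeff (d - single j 1) (abelSeries (x + j + 1) * abelSeries y) := by
  simp only [coeff_mul, ← sum_sub_distrib, ← sub_mul, coeff_abelSeries_sub, Finset.sum_mul,
    Finset.mul_sum]
  simpa only [mul_assoc] using Finsupp.sum_antidiagonal_sum_support_fst d fun j a b =>
    (j + 1 : ℚ)⁻¹ * coeff a (abelSeries (x + j + 1)) * coeff b (abelSeries y)

lemma abelSeries_add (x y : ℤ) : abelSeries (x + y) = abelSeries x * abelSeries y := by
  ext d
  induction d using WellFoundedLT.induction generalizing x y with | _ d ih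
  set F : ℤ → ℚ := fun x =>
    coeff d (abelSeries (x + y)) - coeff d (abelSeries x * abelSeries y) with hF
  have hper : Function.Periodic F 1 := fun x => by
    have h1 := coeff_abelSeries_sub (x + 1 + y) d
    have h2 := coeff_abelSeries_mul_sub (x + 1) y d
    have hsum : ∀ j ∈ d.support,
        (j + 1 : ℚ)⁻¹ * coeff (d - single j 1) (abelSeries (x + 1 + y + j + 1)) =
          (j + 1 : ℚ)⁻¹ * coeff (d - single j 1) (abelSeries (x + 1 + j + 1) * abelSeries y) :=
      fun j hj => by
        have := ih _ (sub_single_one_lt (mem_support_iff.mp hj)) (x + 1 + j + 1) y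
        push_cast at this
        rw [← this, add_right_comm _ (y : ℚ), add_right_comm _ (y : ℚ)]
    rw [sum_congr rfl hsum, ← h2, add_sub_cancel_right, add_right_comm,
      add_sub_cancel_right] at h1
    simp only [hF]
    push_cast
    rw [add_right_comm (x : ℚ) 1]
    linear_combination h1
  have := hper.int_mul_eq x
  simp only [mul_one, hF, Int.cast_zero, zero_add, abelSeries_zero, one_mul, sub_self] at this
  exact sub_eq_zero.mp this

lemma stmt16S_eq : stmt16S = 1 - abelSeries (-1) := by
  ext d
  rw [map_sub, coeff_one, coeff_abelSeries, coeff_apply]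
  by_cases hd : d = 0
  · simp [hd, stmt16S, abelCoeff, stmt16z]
  have hfact := factorial_mul_ascPochhammer_eval (S := ℚ) (one_le_stmt16wt hd) (stmt16len d - 1)
  rw [show stmt16wt d + (stmt16len d - 1) - 1 = stmt16wt d + stmt16len d - 2 by
    have := one_le_stmt16len hd; omega] at hfact
  have hz := (stmt16z_pos d).ne'
  have hf := (Nat.factorial_pos (stmt16wt d - 1)).ne'
  unfold stmt16S
  rw [if_pos hd, if_neg hd, abelCoeff_of_ne_zero _ hd, neg_add_cancel_comm, ← hfact]
  field_simp
  ring

lemma stmt16L_eq : stmt16L = C (1 / 2) * (abelSeries (-2) - 2 * abelSeries (-1) + 1) := by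
  ext d
  rw [two_mul, coeff_C_mul, map_add, map_sub, map_add, coeff_one, coeff_abelSeries,
    coeff_abelSeries, coeff_apply]
  unfold stmt16L
  by_cases hd : d = 0
  · simp [hd, abelCoeff, stmt16z, stmt16len_eq_zero_iff.mpr]
  rw [if_neg hd, abelCoeff_of_ne_zero _ hd, abelCoeff_of_ne_zero _ hd]
  obtain hl | ⟨m, hm⟩ := stmt16len_eq_one_or_eq_add_two hd
  · rw [if_neg (by omega), hl, Nat.sub_self, ascPochhammer_zero]
    simp only [Polynomial.eval_one]
    ring
  have hw := one_le_stmt16wt hd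
  have hfact := factorial_mul_ascPochhammer_eval (S := ℚ) hw m
  rw [show stmt16wt d + m - 1 = stmt16wt d + (m + 2) - 3 by omega] at hfact
  have hz := (stmt16z_pos d).ne'
  have hf := (Nat.factorial_pos (stmt16wt d - 1)).ne'
  rw [if_pos (by omega), hm, show m + 2 - 1 = m + 1 by omega, ← hfact, neg_add_cancel_comm,
    show (-2 : ℚ) + stmt16wt d + 1 = stmt16wt d - 1 by ring,
    ascPochhammer_succ_eval m (stmt16wt d : ℚ),
    ascPochhammer_succ_eval_left m ((stmt16wt d : ℚ) - 1),
    sub_add_cancel]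
  push_cast
  field_simp
  ring

/-- Proposition A.4:
`∑_{ℓ(μ)≥2} (|μ|+ℓ(μ)-3)!(ℓ(μ)-1) p_μ/((|μ|-1)! z_μ)
  = (1/2) (∑_{μ≠∅} (|μ|+ℓ(μ)-2)! p_μ/((|μ|-1)! z_μ))²`
as formal power series in `p₁, p₂, …`. -/
theorem stmt16 :
    stmt16L = (MvPowerSeries.C (1 / 2 : ℚ) : MvPowerSeries ℕ ℚ) * stmt16S ^ 2 := by
  have hsq : abelSeries (-2) = abelSeries (-1) * abelSeries (-1) := by
    convert abelSeries_add (-1) (-1) using 2 <;> norm_num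
  rw [stmt16L_eq, stmt16S_eq, hsq]
  ring
end
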